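/- On the constraint set {⟨γ,γ⟩ = 1, ⟨p,γ⟩ = 0} with all a_i = s²κ_{2i−1,2i}²/16 distinct, the Hamiltonian H = (1/2)⟨p,p⟩ equals Σᵢ [ (s²/8)κ_{2i−1,2i}² F_i + Φ_{2i−1,2i}² − (s/2)κ_{2i−1,2i} Φ_{2i−1,2i} ] − (1/2)(Σᵢ Φ_{2i−1,2i})², where F_i are the quadratic integrals and Φ_{2i−1,2i} the linear integrals. -/
import Mathlib


/-- The `(i,k)` entry of the magnetic momentum map `Φ_s^{u(ℓ)}`:
`Φ_{i,k} = (1/2)(wᵢ z̄ₖ − zᵢ w̄ₖ) + (is/4)(kᵢ + kₖ) zᵢ z̄ₖ`. -/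
noncomputable def phiEntry {ℓ : ℕ} (s : ℝ) (K : Fin ℓ → ℝ) (z w : Fin ℓ → ℂ)
    (i k : Fin ℓ) : ℂ :=
  (1 / 2 : ℂ) * (w i * (starRingEnd ℂ) (z k) - z i * (starRingEnd ℂ) (w k))
    + Complex.I * s / 4 * ((K i : ℂ) + (K k : ℂ)) * z i * (starRingEnd ℂ) (z k)

/-- on `{⟨γ,γ⟩ = 1, ⟨p,γ⟩ = 0}` with all `aᵢ = s²κᵢ²/16`
distinct, `H = (1/2)⟨p,p⟩` equals
`Σᵢ[(s²/8)κᵢ²Fᵢ + Φᵢ² − (s/2)κᵢΦᵢ] − (1/2)(ΣᵢΦᵢ)²`.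
Here `γ1 i, γ2 i, p1 i, p2 i` denote `γ_{2i−1}, γ_{2i}, p_{2i−1}, p_{2i}`,
`κ i` denotes `κ_{2i−1,2i}`, `Φ i` denotes `Φ_{2i−1,2i}`, and
`z i = γ_{2i−1} + i γ_{2i}`, `w i = p_{2i−1} + i p_{2i}`. -/
theorem hamiltonian_in_terms_of_integrals
    (ℓ : ℕ) (γ1 γ2 p1 p2 : Fin ℓ → ℝ) (κ : Fin ℓ → ℝ) (s : ℝ)
    (a : Fin ℓ → ℝ) (ha : ∀ i, a i = s ^ 2 * (κ i) ^ 2 / 16)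
    (hdist : Function.Injective a)
    (z w : Fin ℓ → ℂ)
    (hz : ∀ i, z i = (γ1 i : ℂ) + (γ2 i : ℂ) * Complex.I)
    (hw : ∀ i, w i = (p1 i : ℂ) + (p2 i : ℂ) * Complex.I)
    (hnorm : ∑ i, ((γ1 i) ^ 2 + (γ2 i) ^ 2) = 1)
    (hperp : ∑ i, (p1 i * γ1 i + p2 i * γ2 i) = 0)
    (Φ : Fin ℓ → ℝ)
    (hΦ : ∀ i, Φ i = γ1 i * p2 i - γ2 i * p1 i
      + s * κ i / 2 * ((γ1 i) ^ 2 + (γ2 i) ^ 2))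
    (F : Fin ℓ → ℝ)
    (hF : ∀ i, F i = (∑ k ∈ Finset.univ \ {i},
        Complex.normSq (phiEntry s κ z w i k) / (a i - a k))
      + Complex.normSq (z i)) :
    (1 / 2 : ℝ) * ∑ i, ((p1 i) ^ 2 + (p2 i) ^ 2)
      = (∑ i, (s ^ 2 / 8 * (κ i) ^ 2 * F i + (Φ i) ^ 2 - s / 2 * κ i * Φ i))
        - (1 / 2) * (∑ i, Φ i) ^ 2 := by
  classical
  -- pointwise expansion of |Φ_{ik}|²
  have hI : ∀ i k, Complex.normSq (phiEntry s κ z w i k) =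
      (1/4*(p1 i^2+p2 i^2)) * (γ1 k^2+γ2 k^2)
    + (1/4*(γ1 i^2+γ2 i^2)) * (p1 k^2+p2 k^2)
    + (-(1/2)*(p1 i*γ1 i+p2 i*γ2 i)) * (p1 k*γ1 k+p2 k*γ2 k)
    + (1/2*(γ1 i*p2 i - γ2 i*p1 i)) * (γ1 k*p2 k - γ2 k*p1 k)
    + (s^2/16*(κ i^2*(γ1 i^2+γ2 i^2))) * (γ1 k^2+γ2 k^2)
    + (s^2/8*(κ i*(γ1 i^2+γ2 i^2))) * (κ k*(γ1 k^2+γ2 k^2))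
    + (s^2/16*(γ1 i^2+γ2 i^2)) * (κ k^2*(γ1 k^2+γ2 k^2))
    + (s/4*(κ i*(γ1 i*p2 i-γ2 i*p1 i))) * (γ1 k^2+γ2 k^2)
    + (s/4*(κ i*(γ1 i^2+γ2 i^2))) * (γ1 k*p2 k-γ2 k*p1 k)
    + (s/4*(γ1 i*p2 i-γ2 i*p1 i)) * (κ k*(γ1 k^2+γ2 k^2))
    + (s/4*(γ1 i^2+γ2 i^2)) * (κ k*(γ1 k*p2 k-γ2 k*p1 k)) := by
    intro i k
    rw [phiEntry, hz i, hz k, hw i, hw k]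
    simp only [Complex.normSq_apply, map_add, map_mul, map_sub, map_div₀, map_one, map_ofNat,
      Complex.conj_ofReal, Complex.conj_I, Complex.add_re, Complex.add_im, Complex.mul_re,
      Complex.mul_im, Complex.sub_re, Complex.sub_im, Complex.div_re, Complex.div_im,
      Complex.ofReal_re, Complex.ofReal_im, Complex.I_re, Complex.I_im, Complex.one_re,
      Complex.one_im, Complex.re_ofNat, Complex.im_ofNat, Complex.div_ofNat_re,
      Complex.div_ofNat_im, Complex.normSq_ofNat, Complex.neg_re, Complex.neg_im]
    norm_num
    ring
  -- symmetry of |Φ_{ik}|²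
  have hsym : ∀ i k, Complex.normSq (phiEntry s κ z w k i) = Complex.normSq (phiEntry s κ z w i k) := by
    intro i k
    have h : phiEntry s κ z w k i = -(starRingEnd ℂ) (phiEntry s κ z w i k) := by
      simp only [phiEntry, map_add, map_mul, map_sub, map_div₀, map_one, map_ofNat,
        Complex.conj_conj, Complex.conj_I, Complex.conj_ofReal]
      ring
    rw [h, Complex.normSq_neg, Complex.normSq_conj]
  -- diagonal entries
  have hdiag : ∀ i, Complex.normSq (phiEntry s κ z w i i) = (Φ i)^2 := by
    intro i
    rw [hI i i, hΦ i]
    ring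
  -- normSq (z i)
  have hnz : ∀ i, Complex.normSq (z i) = γ1 i^2 + γ2 i^2 := by
    intro i
    rw [hz i, Complex.normSq_add_mul_I]
  -- the key off-diagonal identity
  have key : ∑ i, (s^2/8 * κ i^2 * ∑ k ∈ Finset.univ \ {i}, Complex.normSq (phiEntry s κ z w i k) / (a i - a k))
      = ∑ i, ∑ k ∈ Finset.univ \ {i}, Complex.normSq (phiEntry s κ z w i k) := by
    have swap : ∀ f : Fin ℓ → Fin ℓ → ℝ,
        ∑ i, ∑ k ∈ Finset.univ \ {i}, f i k = ∑ i, ∑ k ∈ Finset.univ \ {i}, f k i := by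
      intro f
      rw [Finset.sum_comm' (s' := fun k => Finset.univ \ {k}) (t' := Finset.univ)]
      intro x y
      simp [eq_comm, ne_comm]
    set g : Fin ℓ → Fin ℓ → ℝ := fun i k => s^2/8 * κ i^2 * (Complex.normSq (phiEntry s κ z w i k) / (a i - a k)) with hg
    have lhs_eq : ∑ i, (s^2/8 * κ i^2 * ∑ k ∈ Finset.univ \ {i}, Complex.normSq (phiEntry s κ z w i k) / (a i - a k))
        = ∑ i, ∑ k ∈ Finset.univ \ {i}, g i k :=
      Finset.sum_congr rfl fun i _ => Finset.mul_sum _ _ _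
    rw [lhs_eq]
    have h2 : (∑ i, ∑ k ∈ Finset.univ \ {i}, g i k) + (∑ i, ∑ k ∈ Finset.univ \ {i}, g i k)
        = 2 * ∑ i, ∑ k ∈ Finset.univ \ {i}, Complex.normSq (phiEntry s κ z w i k) := by
      calc (∑ i, ∑ k ∈ Finset.univ \ {i}, g i k) + (∑ i, ∑ k ∈ Finset.univ \ {i}, g i k)
          = (∑ i, ∑ k ∈ Finset.univ \ {i}, g i k) + (∑ i, ∑ k ∈ Finset.univ \ {i}, g k i) := by
            rw [swap]
        _ = ∑ i, (∑ k ∈ Finset.univ \ {i}, g i k + ∑ k ∈ Finset.univ \ {i}, g k i) :=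
            Finset.sum_add_distrib.symm
        _ = ∑ i, ∑ k ∈ Finset.univ \ {i}, (g i k + g k i) :=
            Finset.sum_congr rfl fun i _ => Finset.sum_add_distrib.symm
        _ = ∑ i, ∑ k ∈ Finset.univ \ {i}, (2 * Complex.normSq (phiEntry s κ z w i k)) := by
            refine Finset.sum_congr rfl fun i _ => Finset.sum_congr rfl fun k hk => ?_
            have hik : k ≠ i := by simpa using (Finset.mem_sdiff.mp hk).2
            have hane : a i - a k ≠ 0 := sub_ne_zero.mpr fun h => hik (hdist h).symm
            have hs : s ≠ 0 := by
              intro hs0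
              apply hane
              rw [ha i, ha k, hs0]; ring
            have hs2 : s ^ 2 ≠ 0 := pow_ne_zero 2 hs
            have hd : κ i ^ 2 - κ k ^ 2 ≠ 0 := by
              intro h0
              apply hane
              rw [ha i, ha k]
              nlinarith [h0]
            have e1 : a i - a k = s ^ 2 * (κ i ^ 2 - κ k ^ 2) / 16 := by
              rw [ha i, ha k]; ring
            have e2 : a k - a i = s ^ 2 * -(κ i ^ 2 - κ k ^ 2) / 16 := by
              rw [ha i, ha k]; ring
            have hd2 : -(κ i ^ 2 - κ k ^ 2) ≠ 0 := neg_ne_zero.mpr hd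
            have hsd : s ^ 2 * (κ i ^ 2 - κ k ^ 2) ≠ 0 := mul_ne_zero hs2 hd
            have hsd2 : s ^ 2 * -(κ i ^ 2 - κ k ^ 2) ≠ 0 := mul_ne_zero hs2 hd2
            rw [hg]
            simp only
            rw [hsym k i, e1, e2, div_div_eq_mul_div, div_div_eq_mul_div,
              ← mul_div_assoc, ← mul_div_assoc, div_add_div _ _ hsd hsd2,
              div_eq_iff (mul_ne_zero hsd hsd2)]
            ring
        _ = 2 * ∑ i, ∑ k ∈ Finset.univ \ {i}, Complex.normSq (phiEntry s κ z w i k) := by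
            rw [Finset.mul_sum]
            exact Finset.sum_congr rfl fun i _ => (Finset.mul_sum _ _ _).symm
    linarith
  -- the full double sum, factorized
  have hsum2 : ∑ i, ∑ k, Complex.normSq (phiEntry s κ z w i k) =
      (∑ i, 1/4*(p1 i^2+p2 i^2)) * (∑ i, (γ1 i^2+γ2 i^2))
    + (∑ i, 1/4*(γ1 i^2+γ2 i^2)) * (∑ i, (p1 i^2+p2 i^2))
    + (∑ i, -(1/2)*(p1 i*γ1 i+p2 i*γ2 i)) * (∑ i, (p1 i*γ1 i+p2 i*γ2 i))
    + (∑ i, 1/2*(γ1 i*p2 i - γ2 i*p1 i)) * (∑ i, (γ1 i*p2 i - γ2 i*p1 i))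
    + (∑ i, s^2/16*(κ i^2*(γ1 i^2+γ2 i^2))) * (∑ i, (γ1 i^2+γ2 i^2))
    + (∑ i, s^2/8*(κ i*(γ1 i^2+γ2 i^2))) * (∑ i, κ i*(γ1 i^2+γ2 i^2))
    + (∑ i, s^2/16*(γ1 i^2+γ2 i^2)) * (∑ i, κ i^2*(γ1 i^2+γ2 i^2))
    + (∑ i, s/4*(κ i*(γ1 i*p2 i-γ2 i*p1 i))) * (∑ i, (γ1 i^2+γ2 i^2))
    + (∑ i, s/4*(κ i*(γ1 i^2+γ2 i^2))) * (∑ i, (γ1 i*p2 i-γ2 i*p1 i))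
    + (∑ i, s/4*(γ1 i*p2 i-γ2 i*p1 i)) * (∑ i, κ i*(γ1 i^2+γ2 i^2))
    + (∑ i, s/4*(γ1 i^2+γ2 i^2)) * (∑ i, κ i*(γ1 i*p2 i-γ2 i*p1 i)) := by
    rw [Finset.sum_congr rfl fun i _ => Finset.sum_congr rfl fun k _ => hI i k]
    simp only [Finset.sum_add_distrib, ← Finset.mul_sum, ← Finset.sum_mul]
  -- assemble
  have hterm : ∀ i : Fin ℓ, s ^ 2 / 8 * (κ i) ^ 2 * F i + (Φ i) ^ 2 - s / 2 * κ i * Φ i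
      = s^2/8 * κ i^2 * (∑ k ∈ Finset.univ \ {i},
          Complex.normSq (phiEntry s κ z w i k) / (a i - a k))
        + s^2/8*(κ i^2*(γ1 i^2+γ2 i^2))
        + Complex.normSq (phiEntry s κ z w i i)
        - (s/2*(κ i*(γ1 i*p2 i - γ2 i*p1 i)) + s^2/4*(κ i^2*(γ1 i^2+γ2 i^2))) := by
    intro i
    rw [hF i, hnz i, hdiag i, hΦ i]
    ring
  rw [Finset.sum_congr rfl fun i _ => hterm i]
  simp only [Finset.sum_add_distrib, Finset.sum_sub_distrib]
  rw [key]
  have hjoin : (∑ i, ∑ k ∈ Finset.univ \ {i}, Complex.normSq (phiEntry s κ z w i k))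
      + (∑ i, Complex.normSq (phiEntry s κ z w i i))
      = ∑ i, ∑ k, Complex.normSq (phiEntry s κ z w i k) := by
    rw [← Finset.sum_add_distrib]
    exact Finset.sum_congr rfl fun i _ =>
      (Finset.sum_eq_sum_sdiff_singleton_add (Finset.mem_univ i) _).symm
  have hPhiSum : ∑ i, Φ i = (∑ i, (γ1 i*p2 i - γ2 i*p1 i))
      + s/2 * (∑ i, κ i*(γ1 i^2+γ2 i^2)) := by
    rw [Finset.mul_sum, ← Finset.sum_add_distrib]
    exact Finset.sum_congr rfl fun i _ => by rw [hΦ i]; ring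
  simp only [Finset.sum_add_distrib, Finset.sum_sub_distrib, ← Finset.mul_sum]
    at hsum2 hjoin hPhiSum hnorm hperp ⊢
  linear_combination (-1 : ℝ) * hjoin - hsum2
    + (1/2)*((∑ i, Φ i) + (∑ i, γ1 i*p2 i - ∑ i, γ2 i*p1 i)
        + s/2*(∑ i, κ i*(γ1 i^2+γ2 i^2))) * hPhiSum
    - ((1/2)*(∑ i, p1 i^2 + ∑ i, p2 i^2) + s^2/8*(∑ i, κ i^2*(γ1 i^2+γ2 i^2))
        + s/2*(∑ i, κ i*(γ1 i*p2 i - γ2 i*p1 i))) * hnorm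
    + (1/2)*(∑ i, p1 i*γ1 i + ∑ i, p2 i*γ2 i) * hperp
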